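/- arXiv:math/0501269 — 4 statements merged into one kernel-verified Lean document; each statement's English description precedes it below -/
import Mathlib

section
/- Let U and V be formal power series in x and y satisfying U = x y (1+V)^2 and V = y (1+U)^2, and for a fixed parameter x let W(x,s) = s(1+U(x,s)) where U(x,s) denotes U evaluated at second variable s. Then the identity (1+U)^2 U / (1+U+V)^3 = (W - s) / (W (1+W)^3) holds. -/
/-! Since `V = s(1+U)² = W(1+U)`, the denominator factors as `1 + U + V = (1+U)(1+W)`, and
`W - s = sU`; both sides then reduce to `U / ((1+U)(1+W)³)`. -/

lemma one_add_add_eq_mul_one_add {R : Type*} [CommRing R] {s U V W : R}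
    (hV : V = s * (1 + U) ^ 2) (hW : W = s * (1 + U)) :
    1 + U + V = (1 + U) * (1 + W) := by
  rw [hV, hW]; ring

theorem network_integrand_identity_general {K : Type*} [Field K]
    (s U V W : K)
    (hV : V = s * (1 + U) ^ 2)
    (hW : W = s * (1 + U))
    (hWne : W ≠ 0) :
    (1 + U) ^ 2 * U / (1 + U + V) ^ 3 = (W - s) / (W * (1 + W) ^ 3) := by
  obtain ⟨hs, hU1⟩ : s ≠ 0 ∧ 1 + U ≠ 0 := mul_ne_zero_iff.mp (hW ▸ hWne)
  have hWs : W - s = s * U := by rw [hW]; ring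
  rw [one_add_add_eq_mul_one_add hV hW, hWs, hW]
  field_simp

/-- If `U = x·s·(1+V)²`, `V = s·(1+U)²` and `W = s·(1+U)`, then
`(1+U)²·U/(1+U+V)³ = (W - s)/(W·(1+W)³)` (an algebraic identity among these
quantities, valid whenever the denominators do not vanish). -/
theorem network_integrand_identity {K : Type*} [Field K]
    (x s U V W : K)
    (hU : U = x * s * (1 + V) ^ 2)
    (hV : V = s * (1 + U) ^ 2)
    (hW : W = s * (1 + U))
    (hUV : 1 + U + V ≠ 0) (hWne : W ≠ 0) (hW1 : 1 + W ≠ 0) :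
    (1 + U) ^ 2 * U / (1 + U + V) ^ 3 = (W - s) / (W * (1 + W) ^ 3) :=
  network_integrand_identity_general s U V W hV hW hWne
end

section
/- With U, V, W as above (U = x s(1+V)^2, V = s(1+U)^2, W = s(1+U)), the series W satisfies the algebraic equation x s^2 + (1 + 2 x W^2) s + W (x W^3 - 1) = 0. -/
theorem W_algebraic_equation_general {K : Type*} [Field K]
    (x s U V W : K)
    (hU : U = x * s * (1 + V) ^ 2)
    (hV : V = s * (1 + U) ^ 2)
    (hW : W = s * (1 + U)) :
    x * s ^ 2 + (1 + 2 * x * W ^ 2) * s + W * (x * W ^ 3 - 1) = 0 := by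
  subst hW hV
  -- Since `W² = s·V`, the left side is `s·(x·s·(1+V)² - U)`.
  linear_combination (-s) * hU

/-- With `U = x·s·(1+V)²`, `V = s·(1+U)²` and `W = s·(1+U)`
(and `s ≠ 0`), the quantity `W` satisfies the algebraic equation
`x·s² + (1 + 2·x·W²)·s + W·(x·W³ - 1) = 0`. -/
theorem W_algebraic_equation {K : Type*} [Field K]
    (x s U V W : K) (hs : s ≠ 0)
    (hU : U = x * s * (1 + V) ^ 2)
    (hV : V = s * (1 + U) ^ 2)
    (hW : W = s * (1 + U)) :
    x * s ^ 2 + (1 + 2 * x * W ^ 2) * s + W * (x * W ^ 3 - 1) = 0 :=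
  W_algebraic_equation_general x s U V W hU hV hW
end

section
/- For real t with 0 < t < 1, the function Q(x,t) = sqrt(1+4xt+4xt^2) satisfies: the derivative with respect to t of the function F(t) = (1-2(t+4x+4xt))/(4x(1+t)^2) - ((1+2x(1+t))/(2x(1+t)^2))·Q^3 + (2+4xt + (1+2(t-x-tx))/(4x(1+t)^2))·Q + ((2x^2-4x+1)/(4x))·log((Q+1-2x-2xt)/(Q-1+2x+2xt)) - (1/(2x))·log(Q+1+2xt) + ((1-4x)/(2x))·log(1+t) equals (Q - 1 - 2xt - 2xt^2)(2Qt - 2t - 1)/(2xt(1+t)^3 Q), for any fixed x > 0 for which all denominators and log arguments are positive. -/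
/-!
Write `u = 1 + 4xs + 4xs²` and `Q = √u`. Since `Q³ = u Q`, the two terms of `F` carrying `Q³` and
`Q` collapse to `P(s) Q` with `P(s) = (2(1+x)(1+s) - 3) / (4x(1+s)²)`. Using `Q' = 2x(1+2s)/Q`
and `Q² = u`, the logarithms differentiate to
`d/ds log ((Q+1-2x-2xs)/(Q-1+2x+2xs)) = -2/((1+s)Q)` and `d/ds log (Q+1+2xs) = (Q-1)/(sQ)`.
Hence `F'` is a rational function of `s` plus rational multiples of `Q` and `1/Q`, and comparing
it with the integrand needs `Q² = u` only once more.
-/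

open Real Filter Topology

theorem Real.sqrt_pow_three (a : ℝ) : √a ^ 3 = a * √a := by
  rcases le_or_gt 0 a with ha | ha
  · rw [pow_succ, sq_sqrt ha]
  · simp [sqrt_eq_zero_of_nonpos ha.le]

namespace MapIntegrand

noncomputable def Q (x s : ℝ) : ℝ := √(1 + 4 * x * s + 4 * x * s ^ 2)

noncomputable def P (x s : ℝ) : ℝ := (2 * (1 + x) * (1 + s) - 3) / (4 * x * (1 + s) ^ 2)

variable {x t : ℝ}

theorem Q_sq (hu : 0 ≤ 1 + 4 * x * t + 4 * x * t ^ 2) : Q x t ^ 2 = 1 + 4 * x * t + 4 * x * t ^ 2 :=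
  sq_sqrt hu

theorem Q_pow_three_terms_eq {s : ℝ} (hx : x ≠ 0) (hs : 1 + s ≠ 0) :
    -((1 + 2 * x * (1 + s)) / (2 * x * (1 + s) ^ 2)) * Q x s ^ 3
      + (2 + 4 * x * s + (1 + 2 * (s - x - s * x)) / (4 * x * (1 + s) ^ 2)) * Q x s
      = P x s * Q x s := by
  rw [P, Q, sqrt_pow_three]
  field_simp
  ring

theorem hasDerivAt_Q (hu : 0 < 1 + 4 * x * t + 4 * x * t ^ 2) :
    HasDerivAt (Q x) (2 * x * (1 + 2 * t) / Q x t) t := by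
  have hpoly : HasDerivAt (fun s => 1 + 4 * x * s + 4 * x * s ^ 2) (4 * x * (1 + 2 * t)) t := by
    refine ((((hasDerivAt_id' t).const_mul (4 * x)).const_add 1).add
      ((hasDerivAt_pow 2 t).const_mul (4 * x))).congr_deriv ?_
    push_cast
    ring
  unfold Q
  refine (hpoly.sqrt hu.ne').congr_deriv ?_
  field_simp
  ring

theorem hasDerivAt_log_ratio (h1t : 1 + t ≠ 0) (hu : 0 < 1 + 4 * x * t + 4 * x * t ^ 2)
    (hA : 0 < Q x t + 1 - 2 * x - 2 * x * t) (hB : 0 < Q x t - 1 + 2 * x + 2 * x * t) :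
    HasDerivAt (fun s => log ((Q x s + 1 - 2 * x - 2 * x * s) / (Q x s - 1 + 2 * x + 2 * x * s)))
      (-2 / ((1 + t) * Q x t)) t := by
  have hQ := hasDerivAt_Q hu
  have hlin := (hasDerivAt_id' t).const_mul (2 * x)
  have h := ((((hQ.add_const 1).sub_const (2 * x)).sub hlin).div
    (((hQ.sub_const 1).add_const (2 * x)).add hlin) hB.ne').log (div_pos hA hB).ne'
  refine h.congr_deriv ?_
  have hq : Q x t ≠ 0 := (sqrt_pos.2 hu).ne'
  have hq2 := Q_sq hu.le
  simp only [Pi.add_apply, Pi.sub_apply, Pi.div_apply]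
  field_simp
  linear_combination (1 - 2 * x * (1 + t)) * hq2

theorem hasDerivAt_log_Q_add (ht : t ≠ 0) (hu : 0 < 1 + 4 * x * t + 4 * x * t ^ 2)
    (hC : 0 < Q x t + 1 + 2 * x * t) :
    HasDerivAt (fun s => log (Q x s + 1 + 2 * x * s)) ((Q x t - 1) / (t * Q x t)) t := by
  have h := (((hasDerivAt_Q hu).add_const 1).add ((hasDerivAt_id' t).const_mul (2 * x))).log hC.ne'
  refine h.congr_deriv ?_
  have hq : Q x t ≠ 0 := (sqrt_pos.2 hu).ne'
  have hq2 := Q_sq hu.le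
  simp only [Pi.add_apply]
  field_simp
  linear_combination -hq2

theorem hasDerivAt_rational_part (hx : x ≠ 0) (h1t : 1 + t ≠ 0) :
    HasDerivAt (fun s => (1 - 2 * (s + 4 * x + 4 * x * s)) / (4 * x * (1 + s) ^ 2))
      (((1 + 4 * x) * (1 + t) - 3) / (2 * x * (1 + t) ^ 3)) t := by
  have hnum := ((((hasDerivAt_id' t).add_const (4 * x)).add
    ((hasDerivAt_id' t).const_mul (4 * x))).const_mul 2).const_sub 1
  have hden := (((hasDerivAt_id' t).const_add 1).pow 2).const_mul (4 * x)
  have hden_ne : 4 * x * (1 + t) ^ 2 ≠ 0 := by positivity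
  refine (hnum.div hden hden_ne).congr_deriv ?_
  simp only [Pi.pow_apply, Pi.add_apply]
  field_simp
  ring

theorem hasDerivAt_P (hx : x ≠ 0) (h1t : 1 + t ≠ 0) :
    HasDerivAt (P x) ((3 - (1 + x) * (1 + t)) / (2 * x * (1 + t) ^ 3)) t := by
  have hnum := (((hasDerivAt_id' t).const_add 1).const_mul (2 * (1 + x))).sub_const 3
  have hden := (((hasDerivAt_id' t).const_add 1).pow 2).const_mul (4 * x)
  have hden_ne : 4 * x * (1 + t) ^ 2 ≠ 0 := by positivity
  refine (hnum.div hden hden_ne).congr_deriv ?_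
  simp only [Pi.pow_apply]
  field_simp
  ring

theorem derivative_eq_integrand {q : ℝ} (hx : x ≠ 0) (ht : t ≠ 0) (h1t : 1 + t ≠ 0) (hq0 : q ≠ 0)
    (hq : q ^ 2 = 1 + 4 * x * t + 4 * x * t ^ 2) :
    ((1 + 4 * x) * (1 + t) - 3) / (2 * x * (1 + t) ^ 3)
      + ((3 - (1 + x) * (1 + t)) / (2 * x * (1 + t) ^ 3) * q
        + P x t * (2 * x * (1 + 2 * t) / q))
      + (2 * x ^ 2 - 4 * x + 1) / (4 * x) * (-2 / ((1 + t) * q))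
      - 1 / (2 * x) * ((q - 1) / (t * q))
      + (1 - 4 * x) / (2 * x) * (1 / (1 + t))
      = (q - 1 - 2 * x * t - 2 * x * t ^ 2) * (2 * q * t - 2 * t - 1)
          / (2 * x * t * (1 + t) ^ 3 * q) := by
  rw [P]
  field_simp
  linear_combination (-4 * t * (x + t * x + t)) * hq

end MapIntegrand

open MapIntegrand in
theorem antiderivative_of_map_integrand_general
    (x t : ℝ) (hx : 0 < x) (ht0 : 0 < t)
    (hlog1 : 0 < Real.sqrt (1 + 4 * x * t + 4 * x * t ^ 2) + 1 - 2 * x - 2 * x * t)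
    (hlog2 : 0 < Real.sqrt (1 + 4 * x * t + 4 * x * t ^ 2) - 1 + 2 * x + 2 * x * t)
    (hlog3 : 0 < Real.sqrt (1 + 4 * x * t + 4 * x * t ^ 2) + 1 + 2 * x * t) :
    HasDerivAt
      (fun s : ℝ =>
        (1 - 2 * (s + 4 * x + 4 * x * s)) / (4 * x * (1 + s) ^ 2)
        - ((1 + 2 * x * (1 + s)) / (2 * x * (1 + s) ^ 2))
            * Real.sqrt (1 + 4 * x * s + 4 * x * s ^ 2) ^ 3
        + (2 + 4 * x * s + (1 + 2 * (s - x - s * x)) / (4 * x * (1 + s) ^ 2))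
            * Real.sqrt (1 + 4 * x * s + 4 * x * s ^ 2)
        + ((2 * x ^ 2 - 4 * x + 1) / (4 * x))
            * Real.log ((Real.sqrt (1 + 4 * x * s + 4 * x * s ^ 2) + 1 - 2 * x - 2 * x * s)
              / (Real.sqrt (1 + 4 * x * s + 4 * x * s ^ 2) - 1 + 2 * x + 2 * x * s))
        - (1 / (2 * x))
            * Real.log (Real.sqrt (1 + 4 * x * s + 4 * x * s ^ 2) + 1 + 2 * x * s)
        + ((1 - 4 * x) / (2 * x)) * Real.log (1 + s))
      ((Real.sqrt (1 + 4 * x * t + 4 * x * t ^ 2) - 1 - 2 * x * t - 2 * x * t ^ 2)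
        * (2 * Real.sqrt (1 + 4 * x * t + 4 * x * t ^ 2) * t - 2 * t - 1)
        / (2 * x * t * (1 + t) ^ 3 * Real.sqrt (1 + 4 * x * t + 4 * x * t ^ 2)))
      t := by
  have hu : 0 < 1 + 4 * x * t + 4 * x * t ^ 2 := by positivity
  have h1t : 1 + t ≠ 0 := by positivity
  have hG := ((((hasDerivAt_rational_part hx.ne' h1t).add
      ((hasDerivAt_P hx.ne' h1t).mul (hasDerivAt_Q hu))).add
    ((hasDerivAt_log_ratio h1t hu hlog1 hlog2).const_mul ((2 * x ^ 2 - 4 * x + 1) / (4 * x)))).sub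
    ((hasDerivAt_log_Q_add ht0.ne' hu hlog3).const_mul (1 / (2 * x)))).add
    ((((hasDerivAt_id' t).const_add 1).log h1t).const_mul ((1 - 4 * x) / (2 * x)))
  refine (hG.congr_of_eventuallyEq ?_).congr_deriv
    (derivative_eq_integrand hx.ne' ht0.ne' h1t (sqrt_pos.2 hu).ne' (Q_sq hu.le))
  filter_upwards [lt_mem_nhds (show -1 < t by linarith)] with s hs
  have hQ := Q_pow_three_terms_eq hx.ne' (show 1 + s ≠ 0 by linarith)
  simp only [Pi.add_apply, Pi.sub_apply, Pi.mul_apply, Q] at hQ ⊢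
  linear_combination hQ

/-- For fixed `x > 0` and `t ∈ (0,1)` with all denominators and
logarithm arguments positive, the function `F` below (with
`Q = Q(x,t) = √(1+4xt+4xt²)`) is an antiderivative of
`(Q - 1 - 2xt - 2xt²)(2Qt - 2t - 1)/(2xt(1+t)³Q)`. -/
theorem antiderivative_of_map_integrand
    (x t : ℝ) (hx : 0 < x) (ht0 : 0 < t) (ht1 : t < 1)
    (hlog1 : 0 < Real.sqrt (1 + 4 * x * t + 4 * x * t ^ 2) + 1 - 2 * x - 2 * x * t)
    (hlog2 : 0 < Real.sqrt (1 + 4 * x * t + 4 * x * t ^ 2) - 1 + 2 * x + 2 * x * t)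
    (hlog3 : 0 < Real.sqrt (1 + 4 * x * t + 4 * x * t ^ 2) + 1 + 2 * x * t) :
    HasDerivAt
      (fun s : ℝ =>
        (1 - 2 * (s + 4 * x + 4 * x * s)) / (4 * x * (1 + s) ^ 2)
        - ((1 + 2 * x * (1 + s)) / (2 * x * (1 + s) ^ 2))
            * Real.sqrt (1 + 4 * x * s + 4 * x * s ^ 2) ^ 3
        + (2 + 4 * x * s + (1 + 2 * (s - x - s * x)) / (4 * x * (1 + s) ^ 2))
            * Real.sqrt (1 + 4 * x * s + 4 * x * s ^ 2)
        + ((2 * x ^ 2 - 4 * x + 1) / (4 * x))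
            * Real.log ((Real.sqrt (1 + 4 * x * s + 4 * x * s ^ 2) + 1 - 2 * x - 2 * x * s)
              / (Real.sqrt (1 + 4 * x * s + 4 * x * s ^ 2) - 1 + 2 * x + 2 * x * s))
        - (1 / (2 * x))
            * Real.log (Real.sqrt (1 + 4 * x * s + 4 * x * s ^ 2) + 1 + 2 * x * s)
        + ((1 - 4 * x) / (2 * x)) * Real.log (1 + s))
      ((Real.sqrt (1 + 4 * x * t + 4 * x * t ^ 2) - 1 - 2 * x * t - 2 * x * t ^ 2)
        * (2 * Real.sqrt (1 + 4 * x * t + 4 * x * t ^ 2) * t - 2 * t - 1)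
        / (2 * x * t * (1 + t) ^ 3 * Real.sqrt (1 + 4 * x * t + 4 * x * t ^ 2)))
      t :=
  antiderivative_of_map_integrand_general x t hx ht0 hlog1 hlog2 hlog3
end

section
/- Let C(x) be a power series with nonnegative coefficients, radius of convergence ρ, finite value C(ρ) = C_0, and suppose [x^n]C(x)^k ~ k·C_0^{k-1}·[x^n]C(x) as n → ∞ for each fixed k ≥ 1, and that G(x) = exp(C(x)). Then for each fixed k ≥ 1, the ratio ([x^n](C(x)^k/k!)) / ([x^n]G(x)) converges, as n → ∞, to (C_0^{k-1}/(k-1)!)·e^{−C_0}. -/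
/-!
Rescaling by `ρ` turns `C` into a series `D` with nonnegative coefficients summing to `C₀`, so
`[xʲ]Dᵏ ≤ C₀ᵏ`, and the ratios `[xⁿ]Cᵏ / [xⁿ]C` are unchanged. Splitting
`[xⁿ]Dᵏ⁺¹ = ∑ⱼ [xʲ]Dᵏ [xⁿ⁻ʲ]D` at a fixed index `n₀` past which `[xⁿ]D > 0`, the bounded
ratios for `k = 2` and for finitely many other powers give `[xⁿ]Dᵏ ≤ Rᵏ [xⁿ]D` uniformly in `k`
for `n ≥ n₀`. Hence `∑ₖ [xⁿ]Cᵏ / (k! [xⁿ]C)` is dominated by `∑ₖ Rᵏ / k!`, and Tannery's theorem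
gives `[xⁿ]G / [xⁿ]C → ∑ₖ k C₀ᵏ⁻¹ / k! = e^{C₀}`.
-/

open Filter Topology PowerSeries Finset
open scoped Nat

theorem Nat.cast_mul_div_factorial {k : ℕ} (hk : k ≠ 0) (x : ℝ) :
    k * x / k ! = x / (k - 1)! := by
  rw [← Nat.mul_factorial_pred hk]
  have : (k : ℝ) ≠ 0 := Nat.cast_ne_zero.2 hk
  push_cast
  field_simp

theorem Real.hasSum_mul_pow_sub_one_div_factorial (x : ℝ) :
    HasSum (fun k : ℕ => k * x ^ (k - 1) / k !) (Real.exp x) := by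
  rw [← hasSum_nat_add_iff' 1, sum_range_one]
  simp only [Nat.cast_mul_div_factorial (Nat.succ_ne_zero _), Nat.add_sub_cancel,
    CharP.cast_eq_zero, zero_mul, zero_div, sub_zero, Real.exp_eq_exp_ℝ]
  exact NormedSpace.expSeries_div_hasSum_exp x

theorem tendsto_sum_range_div_factorial {a : ℕ → ℕ → ℝ} {b : ℕ → ℝ} {R : ℝ}
    (hlim : ∀ k, Tendsto (fun n => a n k) atTop (𝓝 (b k)))
    (hbound : ∀ᶠ n in atTop, ∀ k, |a n k| ≤ R ^ k) :
    Tendsto (fun n => ∑ k ∈ range (n + 1), a n k / k !) atTop (𝓝 (∑' k, b k / k !)) := by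
  refine (tendsto_tsum_of_dominated_convergence (Real.summable_pow_div_factorial R)
    (fun k => ?_) ?_).congr fun n => (sum_eq_tsum_indicator _ _).symm
  · refine ((hlim k).div_const _).congr' ?_
    filter_upwards [eventually_ge_atTop k] with n hn
    rw [Set.indicator_of_mem (by simp [hn])]
  · filter_upwards [hbound] with n hn k
    refine (norm_indicator_le_norm_self _ _).trans ?_
    rw [Real.norm_eq_abs, abs_div, Nat.abs_cast]
    gcongr
    exact hn k

theorem exists_nonneg_forall_ge_le_mul_of_tendsto_div {f g : ℕ → ℝ} {l : ℝ} {n₀ : ℕ}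
    (h : Tendsto (fun n => f n / g n) atTop (𝓝 l)) (hg : ∀ n ≥ n₀, 0 < g n) :
    ∃ M ≥ 0, ∀ n ≥ n₀, f n ≤ M * g n := by
  obtain ⟨M, hM⟩ := h.bddAbove_range
  refine ⟨max M 0, le_max_right _ _, fun n hn => ?_⟩
  rw [← div_le_iff₀ (hg n hn)]
  exact (hM ⟨n, rfl⟩).trans (le_max_left _ _)

namespace PowerSeries

theorem coeff_pow_succ_eq_sum_range {R : Type*} [Semiring R] (D : R⟦X⟧) (k n : ℕ) :
    coeff n (D ^ (k + 1)) = ∑ j ∈ range (n + 1), coeff j (D ^ k) * coeff (n - j) D := by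
  rw [pow_succ, coeff_mul, Finset.Nat.sum_antidiagonal_eq_sum_range_succ_mk]

theorem coeff_pow_nonneg {R : Type*} [Semiring R] [PartialOrder R] [IsOrderedRing R]
    {D : R⟦X⟧} (hD : ∀ n, 0 ≤ coeff n D) (k n : ℕ) : 0 ≤ coeff n (D ^ k) := by
  induction k generalizing n with
  | zero =>
    rw [pow_zero, coeff_one]
    split_ifs <;> simp
  | succ k ih =>
    rw [coeff_pow_succ_eq_sum_range]
    exact sum_nonneg fun j _ => mul_nonneg (ih j) (hD _)

theorem coeff_pow_mul_coeff_sub_le {R : Type*} [Semiring R] [PartialOrder R] [IsOrderedRing R]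
    {D : R⟦X⟧} (hD : ∀ n, 0 ≤ coeff n D) {j n : ℕ} (hjn : j ≤ n) (k : ℕ) :
    coeff j (D ^ k) * coeff (n - j) D ≤ coeff n (D ^ (k + 1)) := by
  rw [coeff_pow_succ_eq_sum_range]
  exact single_le_sum (f := fun i => coeff i (D ^ k) * coeff (n - i) D)
    (fun i _ => mul_nonneg (coeff_pow_nonneg hD k i) (hD _)) (mem_range_succ_iff.2 hjn)

theorem hasSum_coeff_pow {D : ℝ⟦X⟧} {s : ℝ} (hs : HasSum (fun n => coeff n D) s) (k : ℕ) :
    HasSum (fun n => coeff n (D ^ k)) (s ^ k) := by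
  induction k with
  | zero =>
    simp only [pow_zero, coeff_one]
    exact hasSum_ite_eq 0 1
  | succ k ih =>
    have := hasSum_sum_range_mul_of_summable_norm (f := fun n => coeff n (D ^ k))
      (g := fun n => coeff n D) (summable_norm_iff.2 ih.summable) (summable_norm_iff.2 hs.summable)
    simpa only [← coeff_pow_succ_eq_sum_range, ih.tsum_eq, hs.tsum_eq, ← pow_succ] using this

theorem coeff_pow_le_pow {D : ℝ⟦X⟧} {s : ℝ} (hD : ∀ n, 0 ≤ coeff n D)
    (hs : HasSum (fun n => coeff n D) s) (k n : ℕ) : coeff n (D ^ k) ≤ s ^ k :=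
  le_hasSum (hasSum_coeff_pow hs k) n fun i _ => coeff_pow_nonneg hD k i

/-- The index shift `n ↦ n - j` costs a bounded factor as soon as some power of `D` has a
nonzero `j`-th coefficient; otherwise the left-hand side vanishes. -/
theorem exists_coeff_pow_mul_coeff_sub_le {D : ℝ⟦X⟧} {s : ℝ} (hD : ∀ n, 0 ≤ coeff n D)
    (hs : HasSum (fun n => coeff n D) s) {n₀ : ℕ}
    (hratio : ∀ k ≥ 1, ∃ M ≥ 0, ∀ n ≥ n₀, coeff n (D ^ k) ≤ M * coeff n D) (j : ℕ) :
    ∃ b ≥ 0, ∀ k, ∀ n ≥ n₀, j ≤ n →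
      coeff j (D ^ k) * coeff (n - j) D ≤ b * s ^ k * coeff n D := by
  by_cases h : ∃ k₀, 0 < coeff j (D ^ k₀)
  · obtain ⟨k₀, hpos⟩ := h
    obtain ⟨M, hM0, hM⟩ := hratio (k₀ + 1) (by omega)
    have hs0 : 0 ≤ s := hs.nonneg hD
    refine ⟨M / coeff j (D ^ k₀), by positivity, fun k n hn hjn => ?_⟩
    have hshift : coeff (n - j) D ≤ M / coeff j (D ^ k₀) * coeff n D := by
      rw [div_mul_eq_mul_div, le_div_iff₀ hpos, mul_comm]
      exact (coeff_pow_mul_coeff_sub_le hD hjn k₀).trans (hM n hn)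
    calc coeff j (D ^ k) * coeff (n - j) D
        ≤ s ^ k * (M / coeff j (D ^ k₀) * coeff n D) :=
          mul_le_mul (coeff_pow_le_pow hD hs k j) hshift (hD _) (by positivity)
      _ = M / coeff j (D ^ k₀) * s ^ k * coeff n D := by ring
  · push Not at h
    refine ⟨0, le_rfl, fun k n _ _ => ?_⟩
    rw [le_antisymm (h k) (coeff_pow_nonneg hD k j)]
    simp

theorem exists_coeff_pow_le_pow_mul_coeff {D : ℝ⟦X⟧} {s : ℝ} (hD : ∀ n, 0 ≤ coeff n D)
    (hs : HasSum (fun n => coeff n D) s) {n₀ : ℕ}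
    (hratio : ∀ k ≥ 1, ∃ M ≥ 0, ∀ n ≥ n₀, coeff n (D ^ k) ≤ M * coeff n D) :
    ∃ R, ∀ k ≥ 1, ∀ n ≥ n₀, coeff n (D ^ k) ≤ R ^ k * coeff n D := by
  choose b hb0 hb using exists_coeff_pow_mul_coeff_sub_le hD hs hratio
  obtain ⟨M₂, hM₂0, hM₂⟩ := hratio 2 (by norm_num)
  set B := ∑ j ∈ range n₀, b j
  have hs0 : 0 ≤ s := hs.nonneg hD
  have hB0 : 0 ≤ B := sum_nonneg fun j _ => hb0 j
  set R := 1 + s + B + M₂ with hR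
  refine ⟨R, fun k hk => ?_⟩
  induction k, hk using Nat.le_induction with
  | base =>
    intro n _
    rw [pow_one, pow_one]
    nlinarith [hD n]
  | succ k hk ih =>
    intro n hn
    have hRk : 0 ≤ R ^ k := by positivity
    have hsmall : ∑ j ∈ range n₀, coeff j (D ^ k) * coeff (n - j) D ≤ B * s ^ k * coeff n D := by
      rw [sum_mul, sum_mul]
      exact sum_le_sum fun j hj => hb j k n hn (by have := mem_range.1 hj; omega)
    have hlarge : ∑ j ∈ Ico n₀ (n + 1), coeff j (D ^ k) * coeff (n - j) D
        ≤ R ^ k * (M₂ * coeff n D) := by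
      have hsq : ∑ j ∈ Ico n₀ (n + 1), coeff j D * coeff (n - j) D ≤ coeff n (D ^ 2) := by
        rw [coeff_pow_succ_eq_sum_range, ← sum_range_add_sum_Ico _ (by omega : n₀ ≤ n + 1)]
        simp only [pow_one]
        exact le_add_of_nonneg_left (sum_nonneg fun j _ => mul_nonneg (hD _) (hD _))
      calc ∑ j ∈ Ico n₀ (n + 1), coeff j (D ^ k) * coeff (n - j) D
          ≤ ∑ j ∈ Ico n₀ (n + 1), R ^ k * (coeff j D * coeff (n - j) D) :=
            sum_le_sum fun j hj => by
              rw [← mul_assoc]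
              exact mul_le_mul_of_nonneg_right (ih j (mem_Ico.1 hj).1) (hD _)
        _ ≤ R ^ k * coeff n (D ^ 2) := by rw [← mul_sum]; gcongr
        _ ≤ R ^ k * (M₂ * coeff n D) := by gcongr; exact hM₂ n hn
    have hcoef : B * s ^ k + R ^ k * M₂ ≤ R ^ (k + 1) := by
      have hsk : s ^ k ≤ R ^ k := pow_le_pow_left₀ hs0 (by linarith) k
      calc B * s ^ k + R ^ k * M₂ ≤ R ^ k * (B + M₂) := by nlinarith
        _ ≤ R ^ k * R := by gcongr; linarith
        _ = R ^ (k + 1) := (pow_succ R k).symm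
    rw [coeff_pow_succ_eq_sum_range, ← sum_range_add_sum_Ico _ (by omega : n₀ ≤ n + 1)]
    calc _ ≤ B * s ^ k * coeff n D + R ^ k * (M₂ * coeff n D) := add_le_add hsmall hlarge
      _ = (B * s ^ k + R ^ k * M₂) * coeff n D := by ring
      _ ≤ R ^ (k + 1) * coeff n D := by gcongr; exact hD n

theorem coeff_rescale_pow_div_coeff_rescale {ρ : ℝ} (hρ : ρ ≠ 0) (C : ℝ⟦X⟧) (k n : ℕ) :
    coeff n (rescale ρ C ^ k) / coeff n (rescale ρ C) = coeff n (C ^ k) / coeff n C := by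
  rw [← map_pow, coeff_rescale, coeff_rescale, mul_div_mul_left _ _ (pow_ne_zero n hρ)]

theorem exists_eventually_forall_abs_coeff_pow_div_coeff_le {C : ℝ⟦X⟧} {ρ s : ℝ} (hρ : 0 < ρ)
    (hC : ∀ n, 0 ≤ coeff n C) (hs : HasSum (fun n => coeff n C * ρ ^ n) s)
    (hpos : ∀ᶠ n in atTop, 0 < coeff n C)
    (hconv : ∀ k ≥ 1, ∃ l, Tendsto (fun n => coeff n (C ^ k) / coeff n C) atTop (𝓝 l)) :
    ∃ R, ∀ᶠ n in atTop, ∀ k, |coeff n (C ^ k) / coeff n C| ≤ R ^ k := by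
  obtain ⟨n₀, hn₀⟩ := eventually_atTop.1 hpos
  have hD : ∀ n, 0 ≤ coeff n (rescale ρ C) := fun n => by
    rw [coeff_rescale]
    exact mul_nonneg (pow_nonneg hρ.le n) (hC n)
  have hDs : HasSum (fun n => coeff n (rescale ρ C)) s := by
    simpa only [coeff_rescale, mul_comm] using hs
  have hDpos : ∀ n ≥ n₀, 0 < coeff n (rescale ρ C) := fun n hn => by
    rw [coeff_rescale]
    exact mul_pos (pow_pos hρ n) (hn₀ n hn)
  obtain ⟨R, hR⟩ := exists_coeff_pow_le_pow_mul_coeff hD hDs fun k hk => by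
    obtain ⟨l, hl⟩ := hconv k hk
    exact exists_nonneg_forall_ge_le_mul_of_tendsto_div
      (by simpa only [coeff_rescale_pow_div_coeff_rescale hρ.ne'] using hl) hDpos
  refine ⟨R, ?_⟩
  filter_upwards [eventually_ge_atTop n₀, eventually_ne_atTop 0] with n hn hn0 k
  rcases Nat.eq_zero_or_pos k with rfl | hk
  · simp [coeff_one, hn0]
  · rw [abs_of_nonneg (div_nonneg (coeff_pow_nonneg hC k n) (hC n)),
      ← coeff_rescale_pow_div_coeff_rescale hρ.ne', div_le_iff₀ (hDpos n hn)]
    exact hR k hk n hn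

end PowerSeries

/-- Let `C` be a power series with nonnegative coefficients,
radius of convergence `ρ > 0` and finite value `C(ρ) = C₀`, such that
`[xⁿ]Cᵏ ~ k·C₀^{k-1}·[xⁿ]C` for each fixed `k ≥ 1`, and let `G = exp C`
(expressed coefficientwise).  Then for each fixed `k ≥ 1`,
`([xⁿ](Cᵏ/k!)) / ([xⁿ]G) → (C₀^{k-1}/(k-1)!)·e^{−C₀}` as `n → ∞`. -/
theorem shifted_poisson_components
    (C G : PowerSeries ℝ) (ρ C₀ : ℝ) (hρ : 0 < ρ)
    (hnonneg : ∀ n : ℕ, 0 ≤ PowerSeries.coeff n C)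
    (hval : HasSum (fun n : ℕ => PowerSeries.coeff n C * ρ ^ n) C₀)
    (hasymp : ∀ k : ℕ, 1 ≤ k →
      Tendsto (fun n : ℕ =>
          PowerSeries.coeff n (C ^ k) / PowerSeries.coeff n C)
        atTop (nhds (k * C₀ ^ (k - 1))))
    (hG : ∀ n : ℕ, PowerSeries.coeff n G =
      ∑ k ∈ range (n + 1),
        ((k.factorial : ℝ))⁻¹ * PowerSeries.coeff n (C ^ k)) :
    ∀ k : ℕ, 1 ≤ k →
      Tendsto (fun n : ℕ =>
          (PowerSeries.coeff n (C ^ k) / k.factorial)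
            / PowerSeries.coeff n G)
        atTop
        (nhds (C₀ ^ (k - 1) / (k - 1).factorial * Real.exp (-C₀))) := by
  intro k hk
  have hpos : ∀ᶠ n in atTop, 0 < coeff n C := by
    filter_upwards [(hasymp 1 le_rfl).eventually_ne (by norm_num : ((1 : ℕ) : ℝ) * C₀ ^ 0 ≠ 0)]
      with n hn
    exact (hnonneg n).lt_of_ne' fun h => hn (by simp [h])
  have hlim : ∀ j : ℕ,
      Tendsto (fun n => coeff n (C ^ j) / coeff n C) atTop (𝓝 (j * C₀ ^ (j - 1))) := by
    intro j
    rcases Nat.eq_zero_or_pos j with rfl | hj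
    · refine tendsto_const_nhds.congr' ?_
      filter_upwards [eventually_ne_atTop 0] with n hn
      simp [coeff_one, hn]
    · exact hasymp j hj
  obtain ⟨R, hR⟩ := exists_eventually_forall_abs_coeff_pow_div_coeff_le hρ hnonneg hval hpos
    fun j _ => ⟨_, hlim j⟩
  have hGC : Tendsto (fun n => coeff n G / coeff n C) atTop (𝓝 (Real.exp C₀)) := by
    have := tendsto_sum_range_div_factorial hlim hR
    rw [(Real.hasSum_mul_pow_sub_one_div_factorial C₀).tsum_eq] at this
    refine this.congr fun n => ?_
    rw [hG, sum_div]
    exact sum_congr rfl fun j _ => by ring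
  have := ((hasymp k hk).div_const (k ! : ℝ)).div hGC (Real.exp_pos C₀).ne'
  rw [Nat.cast_mul_div_factorial (by omega)] at this
  rw [Real.exp_neg, ← div_eq_mul_inv]
  refine this.congr' ?_
  filter_upwards [hpos] with n hn
  rw [Pi.div_apply, div_right_comm _ (coeff n C), div_div_div_cancel_right₀ hn.ne']
end
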